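/- Let x₁ ∈ ℂⁿ be a unit vector, λ₁ ∈ ℂ, and v₁ = [λ₁x₁; x₁]/√(1 + |λ₁|²) ∈ ℂ^{2n}. Let Q ∈ ℂ^{n×m} have orthonormal columns and W = diag(Q, Q) ∈ ℂ^{2n×2m}. Then the angle between v₁ and span{W} equals the angle θ₁ between x₁ and span{Q}; that is, ‖(I_{2n} − WWᴴ)v₁‖ = sin θ₁ = ‖(I_n − QQᴴ)x₁‖. -/

import Mathlib

/-! Since `W Wᴴ = diag(Q Qᴴ, Q Qᴴ)`, the residual of `v₁` is `[λ₁ r; r] / √(1 + |λ₁|²)` with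
`r = x₁ - Q Qᴴ x₁`, and the norm of `[λ₁ r; r]` is exactly `√(1 + |λ₁|²) ‖r‖`. -/

open Matrix Polynomial

/-- Euclidean norm of a complex vector. -/
noncomputable def vnorm {ι : Type*} [Fintype ι] (x : ι → ℂ) : ℝ :=
  Real.sqrt (∑ i, ‖x i‖ ^ 2)

/-- Spectral norm (operator 2-norm) of a complex matrix. -/
noncomputable def spec {ι κ : Type*} [Fintype ι] [Fintype κ] [DecidableEq κ]
    (A : Matrix ι κ ℂ) : ℝ :=
  ‖LinearMap.toContinuousLinearMap (Matrix.toEuclideanLin A)‖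

/-- Sine of the angle between two vectors: distance from a/‖a‖ to span{b}. -/
noncomputable def sAngle {ι : Type*} [Fintype ι] (a b : ι → ℂ) : ℝ :=
  ⨅ α : ℂ, vnorm ((vnorm a)⁻¹ • a - α • b)

lemma vnorm_eq_norm_toLp {ι : Type*} [Fintype ι] (x : ι → ℂ) :
    vnorm x = ‖(WithLp.toLp 2 x : EuclideanSpace ℂ ι)‖ :=
  (EuclideanSpace.norm_eq _).symm

lemma vnorm_smul {ι : Type*} [Fintype ι] (c : ℂ) (x : ι → ℂ) :
    vnorm (c • x) = ‖c‖ * vnorm x := by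
  rw [vnorm_eq_norm_toLp, vnorm_eq_norm_toLp, WithLp.toLp_smul, norm_smul]

lemma vnorm_sumElim_smul_self {ι : Type*} [Fintype ι] (a : ℂ) (r : ι → ℂ) :
    vnorm (Sum.elim (a • r) r) = Real.sqrt (1 + ‖a‖ ^ 2) * vnorm r := by
  have hsq : ∑ i, ‖Sum.elim (a • r) r i‖ ^ 2 = (1 + ‖a‖ ^ 2) * ∑ i, ‖r i‖ ^ 2 := by
    simp only [Fintype.sum_sum_type, Sum.elim_inl, Sum.elim_inr, Pi.smul_apply, smul_eq_mul,
      norm_mul, mul_pow, ← Finset.mul_sum]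
    ring
  rw [vnorm, vnorm, hsq, Real.sqrt_mul (by positivity)]

lemma fromBlocks_zero_zero_mulVec_sumElim {R ι κ ι' κ' : Type*} [Semiring R]
    [Fintype κ] [Fintype κ'] (A : Matrix ι κ R) (B : Matrix ι' κ' R) (u : κ → R) (v : κ' → R) :
    fromBlocks A 0 0 B *ᵥ Sum.elim u v = Sum.elim (A *ᵥ u) (B *ᵥ v) := by
  simp [fromBlocks_mulVec]

lemma fromBlocks_zero_zero_mul_conjTranspose_self {R ι κ : Type*} [Semiring R] [StarRing R]
    [Fintype κ] (Q : Matrix ι κ R) :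
    fromBlocks Q 0 0 Q * (fromBlocks Q 0 0 Q)ᴴ = fromBlocks (Q * Qᴴ) 0 0 (Q * Qᴴ) := by
  simp [fromBlocks_conjTranspose, fromBlocks_multiply]

theorem stmt7_general {n m : ℕ} (x1 : Fin n → ℂ) (lam1 : ℂ)
    (Q : Matrix (Fin n) (Fin m) ℂ)
    (W : Matrix (Fin n ⊕ Fin n) (Fin m ⊕ Fin m) ℂ)
    (hW : W = Matrix.fromBlocks Q 0 0 Q)
    (v1 : Fin n ⊕ Fin n → ℂ)
    (hv : v1 = (Real.sqrt (1 + ‖lam1‖ ^ 2) : ℂ)⁻¹ • Sum.elim (lam1 • x1) x1) :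
    vnorm (v1 - (W * Wᴴ) *ᵥ v1) = vnorm (x1 - (Q * Qᴴ) *ᵥ x1) := by
  subst hW hv
  set c := Real.sqrt (1 + ‖lam1‖ ^ 2)
  set r := x1 - (Q * Qᴴ) *ᵥ x1
  have hc : 0 < c := Real.sqrt_pos.mpr (by positivity)
  have hresidual : (c : ℂ)⁻¹ • Sum.elim (lam1 • x1) x1 -
      (fromBlocks Q 0 0 Q * (fromBlocks Q 0 0 Q)ᴴ) *ᵥ ((c : ℂ)⁻¹ • Sum.elim (lam1 • x1) x1) =
      (c : ℂ)⁻¹ • Sum.elim (lam1 • r) r := by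
    rw [fromBlocks_zero_zero_mul_conjTranspose_self, mulVec_smul, fromBlocks_zero_zero_mulVec_sumElim,
      ← smul_sub, ← Sum.elim_sub_sub, mulVec_smul, ← smul_sub]
  rw [hresidual, vnorm_smul, vnorm_sumElim_smul_self, norm_inv, Complex.norm_real,
    Real.norm_of_nonneg hc.le, inv_mul_cancel_left₀ hc.ne']

theorem stmt7 {n m : ℕ} (x1 : Fin n → ℂ) (hx : vnorm x1 = 1) (lam1 : ℂ)
    (Q : Matrix (Fin n) (Fin m) ℂ) (hQ : Qᴴ * Q = 1)
    (W : Matrix (Fin n ⊕ Fin n) (Fin m ⊕ Fin m) ℂ)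
    (hW : W = Matrix.fromBlocks Q 0 0 Q)
    (v1 : Fin n ⊕ Fin n → ℂ)
    (hv : v1 = (Real.sqrt (1 + ‖lam1‖ ^ 2) : ℂ)⁻¹ • Sum.elim (lam1 • x1) x1) :
    vnorm (v1 - (W * Wᴴ) *ᵥ v1) = vnorm (x1 - (Q * Qᴴ) *ᵥ x1) :=
  stmt7_general x1 lam1 Q W hW v1 hv
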